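/- Let k ≥ 2, l ≥ 3, and n be positive integers such that F_l^k exactly divides F_n. Then l * F_l^(k-2) ≤ n, and consequently log(l) + (k-2)(l-2) log(φ) ≤ log(n), where φ = (1+√5)/2. -/

import Mathlib

/-!
Since `gcd (F_l, F_n) = F_(gcd (l, n))`, the divisibility `F_l ∣ F_n` forces `n = l a`.
Raising `φ^l = F_l φ + F_(l-1)` to the power `a` and comparing with Binet's formula gives
`F_(la) = ∑ᵢ C(a,i) F_l^i F_(l-1)^(a-i) F_i`. For a prime `p ∣ F_l` the terms with `i ≥ 2` are
divisible by a higher power of `p` than the term `a F_l F_(l-1)^(a-1)`, unless `p = 2` and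
`v_2(F_l) = 1`; this gives `v_p(F_(la)) = v_p(F_l) + v_p(a)`, and in the exceptional case passing
through `F_6 = 8` shows that the valuation is at most one larger. Either way
`k v_p(F_l) ≤ v_p(F_l) + v_p(a) + 1`, so `(k - 2) v_p(F_l) ≤ v_p(a)` for every prime, that is
`F_l^(k-2) ∣ a`. The logarithmic form follows from `φ^(l-2) ≤ F_l`.
-/

open Real Finset

namespace Nat

theorem fib_add_one_mul_eq_sum (m a : ℕ) :
    fib ((m + 1) * a) =
      ∑ i ∈ range (a + 1), fib (m + 1) ^ i * fib m ^ (a - i) * a.choose i * fib i := by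
  have expand (x : ℝ) (hx : x * fib (m + 1) + fib m = x ^ (m + 1)) :
      x ^ ((m + 1) * a) =
        ∑ i ∈ range (a + 1),
          (fib (m + 1) : ℝ) ^ i * fib m ^ (a - i) * a.choose i * x ^ i := by
    rw [pow_mul, ← hx, add_pow]
    exact sum_congr rfl fun i _ => by ring
  apply Nat.cast_injective (R := ℝ)
  rw [coe_fib_eq, expand _ (goldenRatio_mul_fib_succ_add_fib m),
    expand _ (goldenConj_mul_fib_succ_add_fib m), ← sum_sub_distrib, sum_div]
  push_cast
  exact sum_congr rfl fun i _ => by rw [coe_fib_eq i]; ring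

theorem dvd_of_fib_dvd_fib {l n : ℕ} (hl : 3 ≤ l) (h : fib l ∣ fib n) : l ∣ n := by
  have hgcd : fib (gcd l n) = fib l := by rw [fib_gcd, Nat.gcd_eq_left h]
  have hg : 2 ≤ gcd l n := by
    by_contra! hlt
    exact (fib_mono (by omega : gcd l n ≤ 2)).not_gt (hgcd ▸ (fib_lt_fib le_rfl).mpr (by omega))
  rw [← fib_strictMonoOn.injOn hg (Set.mem_Ici.mpr (by omega)) hgcd]
  exact gcd_dvd_right l n

end Nat

section
variable {p : ℕ} [hp : Fact p.Prime]

theorem padicValNat_add_of_pow_succ_dvd {x y : ℕ} (hx : x ≠ 0)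
    (hy : p ^ (padicValNat p x + 1) ∣ y) : padicValNat p (x + y) = padicValNat p x := by
  have hxy : x + y ≠ 0 := by omega
  apply le_antisymm
  · by_contra! hlt
    have := (padicValNat_dvd_iff_le hxy).mpr hlt
    exact pow_succ_padicValNat_not_dvd hx ((Nat.dvd_add_left hy).mp this)
  · exact (padicValNat_dvd_iff_le hxy).mp
      (dvd_add pow_padicValNat_dvd ((pow_dvd_pow p (Nat.le_succ _)).trans hy))

theorem sub_one_mul_padicValNat_lt {i : ℕ} (hi : i ≠ 0) : (p - 1) * padicValNat p i < i := by
  have bernoulli := one_add_mul_le_pow_of_sq_nonneg (sq_nonneg (p - 1 : ℕ)) (sq_nonneg _)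
    (Nat.zero_le _) (padicValNat p i)
  rw [Nat.add_sub_cancel' hp.out.one_le] at bernoulli
  have := Nat.le_of_dvd (Nat.pos_of_ne_zero hi) (pow_padicValNat_dvd (p := p) (n := i))
  simp only [Nat.cast_id] at bernoulli
  rw [mul_comm]; omega

theorem padicValNat_le_padicValNat_add_padicValNat_choose {a i : ℕ} (hi : i ≠ 0)
    (hia : i ≤ a) :
    padicValNat p a ≤ padicValNat p i + padicValNat p (a.choose i) := by
  obtain ⟨b, rfl⟩ := Nat.exists_eq_add_of_le' (Nat.one_le_iff_ne_zero.mpr hi)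
  obtain ⟨c, rfl⟩ := Nat.exists_eq_add_of_le' (show 1 ≤ a by omega)
  have key := congrArg (padicValNat p) (Nat.add_one_mul_choose_eq c b)
  rw [padicValNat.mul (by omega) (Nat.choose_pos (by omega)).ne',
    padicValNat.mul (Nat.choose_pos (by omega)).ne' (by omega)] at key
  omega

theorem padicValNat_lt_padicValNat_choose_add {a i s : ℕ} (hs : 1 ≤ s) (hi : 2 ≤ i)
    (hia : i ≤ a) (h : p ≠ 2 ∨ 2 ≤ s ∨ ¬ p ∣ a) :
    padicValNat p a < padicValNat p (a.choose i) + (i - 1) * s := by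
  have hchoose := padicValNat_le_padicValNat_add_padicValNat_choose (p := p) (by omega) hia
  have hval := sub_one_mul_padicValNat_lt (p := p) (i := i) (by omega)
  have hs1 : (i - 1) * 1 ≤ (i - 1) * s := Nat.mul_le_mul_left _ hs
  rcases h with hp2 | hs2 | hpa
  · have : 2 * padicValNat p i ≤ (p - 1) * padicValNat p i :=
      Nat.mul_le_mul_right _ (by have := hp.out.two_le; omega)
    omega
  · have : (i - 1) * 2 ≤ (i - 1) * s := Nat.mul_le_mul_left _ hs2
    have : padicValNat p i ≤ (p - 1) * padicValNat p i :=
      Nat.le_mul_of_pos_left _ (by have := hp.out.two_le; omega)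
    omega
  · rw [padicValNat.eq_zero_of_not_dvd hpa]
    omega

theorem padicValNat_fib_mul {m a : ℕ} (hm : m ≠ 0) (hpm : p ∣ Nat.fib m) (ha : a ≠ 0)
    (h : p ≠ 2 ∨ 2 ≤ padicValNat p (Nat.fib m) ∨ ¬ p ∣ a) :
    padicValNat p (Nat.fib (m * a)) = padicValNat p (Nat.fib m) + padicValNat p a := by
  obtain ⟨m, rfl⟩ := Nat.exists_eq_add_of_le' (Nat.one_le_iff_ne_zero.mpr hm)
  obtain ⟨b, rfl⟩ := Nat.exists_eq_add_of_le' (Nat.one_le_iff_ne_zero.mpr ha)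
  set d := Nat.fib (m + 1)
  set g := Nat.fib m
  set s := padicValNat p d
  have hd : d ≠ 0 := Nat.fib_pos.mpr m.succ_pos |>.ne'
  have hs : 1 ≤ s := one_le_padicValNat_of_dvd hd hpm
  have hpg : ¬ p ∣ g := fun hpg => hp.out.one_lt.ne'
    (Nat.eq_one_of_dvd_one (Nat.fib_coprime_fib_succ m ▸ Nat.dvd_gcd hpg hpm))
  have hg : g ≠ 0 := fun hg => hpg (hg ▸ dvd_zero p)
  have hlead_ne : d * g ^ b * (b + 1) ≠ 0 := mul_ne_zero (mul_ne_zero hd (pow_ne_zero _ hg)) ha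
  have hlead : padicValNat p (d * g ^ b * (b + 1)) = s + padicValNat p (b + 1) := by
    rw [padicValNat.mul (mul_ne_zero hd (pow_ne_zero _ hg)) ha,
      padicValNat.mul hd (pow_ne_zero _ hg), padicValNat.pow, padicValNat.eq_zero_of_not_dvd hpg,
      mul_zero, add_zero]
  have htail : p ^ (s + padicValNat p (b + 1) + 1) ∣
      ∑ i ∈ range b,
        d ^ (i + 2) * g ^ (b + 1 - (i + 2)) * (b + 1).choose (i + 2) * Nat.fib (i + 2) := by
    refine dvd_sum fun i hi => ?_
    have hlt := padicValNat_lt_padicValNat_choose_add (p := p) (a := b + 1) (i := i + 2) hs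
      (by omega) (by simp at hi; omega) (by simpa using h)
    have hexp : s + padicValNat p (b + 1) + 1 ≤
        s * (i + 2) + padicValNat p ((b + 1).choose (i + 2)) := by
      rw [show i + 2 - 1 = i + 1 from rfl] at hlt
      linarith [show s * (i + 2) = s + (i + 1) * s by ring]
    calc p ^ (s + padicValNat p (b + 1) + 1)
        ∣ (p ^ s) ^ (i + 2) * p ^ padicValNat p ((b + 1).choose (i + 2)) := by
          rw [← pow_mul, ← pow_add]; exact pow_dvd_pow p hexp
      _ ∣ d ^ (i + 2) * (b + 1).choose (i + 2) :=
          mul_dvd_mul (pow_dvd_pow_of_dvd pow_padicValNat_dvd _) pow_padicValNat_dvd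
      _ ∣ _ := Dvd.intro (g ^ (b + 1 - (i + 2)) * Nat.fib (i + 2)) (by ring)
  rw [Nat.fib_add_one_mul_eq_sum, sum_range_succ', sum_range_succ', ← hlead]
  simp only [Nat.fib_zero, mul_zero, add_zero, pow_one, Nat.fib_one, mul_one,
    Nat.choose_one_right, zero_add, Nat.add_sub_cancel]
  rw [add_comm]
  exact padicValNat_add_of_pow_succ_dvd hlead_ne (hlead ▸ htail)

theorem padicValNat_fib_mul_le {m a : ℕ} (hm : m ≠ 0) (hpm : p ∣ Nat.fib m) (ha : a ≠ 0) :
    padicValNat p (Nat.fib (m * a)) ≤ padicValNat p (Nat.fib m) + padicValNat p a + 1 := by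
  by_cases h : p ≠ 2 ∨ 2 ≤ padicValNat p (Nat.fib m) ∨ ¬ p ∣ a
  · rw [padicValNat_fib_mul hm hpm ha h]
    omega
  push Not at h
  -- `m` is an odd multiple of `3` (else `F_6 = 8 ∣ F_m`) and `a` is even, so `m a = 6 c b` and
  -- the exact formula applies to `F_6` instead.
  obtain ⟨rfl, hs, b, rfl⟩ := h
  obtain ⟨c, rfl⟩ : 3 ∣ m := Nat.dvd_of_fib_dvd_fib le_rfl hpm
  have hb : b ≠ 0 := right_ne_zero_of_mul ha
  have hcb : c * b ≠ 0 := mul_ne_zero (right_ne_zero_of_mul hm) hb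
  have hs1 : padicValNat 2 (Nat.fib (3 * c)) = 1 :=
    le_antisymm (by omega) (one_le_padicValNat_of_dvd (Nat.fib_pos.mpr (by omega)).ne' hpm)
  have hc : ¬ 2 ∣ c := by
    rintro ⟨e, rfl⟩
    have h8 : 2 ^ 3 ∣ Nat.fib (3 * (2 * e)) := Nat.fib_dvd 6 _ ⟨e, by ring⟩
    have := (padicValNat_dvd_iff_le (Nat.fib_pos.mpr (by omega)).ne').mp h8
    omega
  have hfib6 : padicValNat 2 (Nat.fib 6) = 3 := padicValNat.prime_pow (p := 2) 3
  have h6 := padicValNat_fib_mul (p := 2) (m := 6) (a := c * b) (by norm_num) (by decide)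
    hcb (by omega)
  rw [show 3 * c * (2 * b) = 6 * (c * b) by ring, h6, hs1, hfib6,
    padicValNat.mul two_ne_zero hb, padicValNat.mul (right_ne_zero_of_mul hm) hb,
    padicValNat.eq_zero_of_not_dvd hc, padicValNat_self]
  omega

end

theorem Nat.mul_fib_pow_sub_two_dvd {k l n : ℕ} (hk : k ≠ 0) (hl : 3 ≤ l) (hn : n ≠ 0)
    (h : Nat.fib l ^ k ∣ Nat.fib n) : l * Nat.fib l ^ (k - 2) ∣ n := by
  obtain ⟨a, rfl⟩ := Nat.dvd_of_fib_dvd_fib hl ((dvd_pow_self _ hk).trans h)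
  have ha : a ≠ 0 := right_ne_zero_of_mul hn
  have hfl : Nat.fib l ≠ 0 := (Nat.fib_pos.mpr (by omega)).ne'
  refine mul_dvd_mul_left l ?_
  rw [← Nat.factorization_prime_le_iff_dvd (pow_ne_zero _ hfl) ha]
  intro p hp
  have := Fact.mk hp
  rw [Nat.factorization_pow, Finsupp.smul_apply, smul_eq_mul, Nat.factorization_def _ hp,
    Nat.factorization_def _ hp]
  by_cases hpl : p ∣ Nat.fib l
  swap
  · simp [padicValNat.eq_zero_of_not_dvd hpl]
  have hs := one_le_padicValNat_of_dvd hfl hpl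
  have hlow : k * padicValNat p (Nat.fib l) ≤ padicValNat p (Nat.fib (l * a)) := by
    rw [← padicValNat_dvd_iff_le (Nat.fib_pos.mpr (Nat.pos_of_ne_zero hn)).ne', mul_comm,
      pow_mul]
    exact (pow_dvd_pow_of_dvd pow_padicValNat_dvd k).trans h
  have hup := padicValNat_fib_mul_le (by omega) hpl ha
  rcases Nat.lt_or_ge k 2 with hk2 | hk2
  · simp [Nat.sub_eq_zero_of_le hk2.le]
  · obtain ⟨j, rfl⟩ := Nat.exists_eq_add_of_le' hk2
    simp only [Nat.add_sub_cancel]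
    nlinarith

theorem Real.goldenRatio_pow_le_fib_add_two : ∀ n : ℕ, goldenRatio ^ n ≤ Nat.fib (n + 2)
  | 0 => by simp
  | 1 => by norm_num [Nat.fib_add_two]; linarith [goldenRatio_lt_two]
  | n + 2 => by
    have hrec : goldenRatio ^ (n + 2) = goldenRatio ^ n + goldenRatio ^ (n + 1) := by
      rw [pow_add, goldenRatio_sq]; ring
    have ih := goldenRatio_pow_le_fib_add_two (n + 1)
    rw [hrec, Nat.fib_add_two, Nat.cast_add]
    linarith [goldenRatio_pow_le_fib_add_two n]

theorem mul_fib_pow_le_and_log_ineq_general (k l n : ℕ)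
    (hk : 2 ≤ k) (hl : 3 ≤ l) (hn : 1 ≤ n)
    (hdvd : Nat.fib l ^ k ∣ Nat.fib n) :
    l * Nat.fib l ^ (k - 2) ≤ n ∧
      Real.log l + ((k : ℝ) - 2) * ((l : ℝ) - 2) * Real.log goldenRatio ≤ Real.log n := by
  have hle : l * Nat.fib l ^ (k - 2) ≤ n :=
    Nat.le_of_dvd hn (Nat.mul_fib_pow_sub_two_dvd (by omega) hl (by omega) hdvd)
  refine ⟨hle, ?_⟩
  have hφ : goldenRatio ^ (l - 2) ≤ Nat.fib l := by
    simpa [Nat.sub_add_cancel (by omega : 2 ≤ l)] using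
      Real.goldenRatio_pow_le_fib_add_two (l - 2)
  have hmono : (l : ℝ) * goldenRatio ^ ((l - 2) * (k - 2)) ≤ n :=
    calc (l : ℝ) * goldenRatio ^ ((l - 2) * (k - 2)) ≤ l * Nat.fib l ^ (k - 2) := by
          rw [pow_mul]; gcongr
      _ ≤ n := by exact_mod_cast hle
  have hlog := Real.log_le_log (by positivity) hmono
  rw [Real.log_mul (by positivity) (by positivity), Real.log_pow, Nat.cast_mul,
    Nat.cast_sub hk, Nat.cast_sub (by omega : 2 ≤ l)] at hlog
  push_cast at hlog
  linarith

theorem mul_fib_pow_le_and_log_ineq (k l n : ℕ)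
    (hk : 2 ≤ k) (hl : 3 ≤ l) (hn : 1 ≤ n)
    (hdvd : Nat.fib l ^ k ∣ Nat.fib n) (hndvd : ¬ Nat.fib l ^ (k + 1) ∣ Nat.fib n) :
    l * Nat.fib l ^ (k - 2) ≤ n ∧
      Real.log l + ((k : ℝ) - 2) * ((l : ℝ) - 2) * Real.log goldenRatio ≤ Real.log n :=
  mul_fib_pow_le_and_log_ineq_general k l n hk hl hn hdvd
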